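/- Let d ∈ ℕ, R ∈ (0,∞), M an Orlicz function, α* < 0 with φ'(α*) = R, and Y_1, …, Y_d i.i.d. with Y_i = M(Z_i) - R where Z_i has Gibbs density p(x) = exp(α*·M(x) - φ(α*)). Then for every c > 0, vol_d(B_M^d(dR)) ≥ exp(d(φ(α*) - α*R)) · exp(c·α*·√d) · P[(1/√d)∑_{i=1}^d Y_i ∈ [-c, 0]]. -/

import Mathlib

/-!
Under the product of the Gibbs laws, the vector `(Z_1, …, Z_d)` has Lebesgue density
`exp (α* ∑ M(x_i) - d φ(α*))`. Since `α* < 0`, on the event `-c√d ≤ ∑ Y_i ≤ 0` this density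
is at most `exp (α* (dR - c√d) - d φ(α*))`, and the event lies in the Orlicz ball `B_M^d(dR)`.
So the probability of the event is at most that constant times the volume of the ball, which is
finite because a convex `M` vanishing only at `0` grows at least linearly.
-/

open MeasureTheory

def IsOrlicz (M : ℝ → ℝ) : Prop :=
  ConvexOn ℝ Set.univ M ∧ (∀ t, M (-t) = M t) ∧ M 0 = 0 ∧ ∀ t ≠ 0, 0 < M t

open scoped ENNReal

namespace IsOrlicz

variable {M : ℝ → ℝ}

theorem continuous (hM : IsOrlicz M) : Continuous M :=
  continuousOn_univ.mp (hM.1.continuousOn isOpen_univ)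

theorem nonneg (hM : IsOrlicz M) (t : ℝ) : 0 ≤ M t := by
  rcases eq_or_ne t 0 with rfl | ht
  · exact hM.2.2.1.ge
  · exact (hM.2.2.2 t ht).le

theorem mul_le_of_one_le (hM : IsOrlicz M) {t : ℝ} (ht : 1 ≤ t) : t * M 1 ≤ M t := by
  have h := hM.1.secant_mono (Set.mem_univ 0) (Set.mem_univ 1) (Set.mem_univ t)
    one_ne_zero (by linarith) ht
  rw [hM.2.2.1, sub_zero, sub_zero, sub_zero, div_one, le_div_iff₀ (by linarith)] at h
  linarith

theorem abs_le_of_le (hM : IsOrlicz M) {t r : ℝ} (h : M t ≤ r) : |t| ≤ max 1 (r / M 1) := by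
  by_contra! hlt
  have h1 : 1 < |t| := (le_max_left _ _).trans_lt hlt
  have hM1 : 0 < M 1 := hM.2.2.2 1 one_ne_zero
  have hMt : M |t| = M t := by
    rcases abs_choice t with h | h <;> rw [h]
    exact hM.2.1 t
  have := hM.mul_le_of_one_le h1.le
  rw [hMt] at this
  have := (div_lt_iff₀ hM1).mp ((le_max_right _ _).trans_lt hlt)
  linarith

theorem isBounded_setOf_sum_le (hM : IsOrlicz M) {ι : Type*} [Fintype ι] (r : ℝ) :
    Bornology.IsBounded {x : ι → ℝ | ∑ i, M (x i) ≤ r} := by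
  refine isBounded_iff_forall_norm_le.mpr ⟨max 1 (r / M 1), fun x hx => ?_⟩
  refine (pi_norm_le_iff_of_nonneg (by positivity)).mpr fun i => ?_
  rw [Real.norm_eq_abs]
  refine hM.abs_le_of_le (le_trans ?_ hx)
  exact Finset.single_le_sum (fun j _ => hM.nonneg (x j)) (Finset.mem_univ i)

end IsOrlicz

namespace MeasureTheory

section Products

variable {ι X : Type*} [MeasurableSpace X]

theorem lintegral_fin_nat_prod_eq_prod {n : ℕ} {μ : Fin n → Measure X}
    [∀ i, SigmaFinite (μ i)] {f : Fin n → X → ℝ≥0∞} (hf : ∀ i, Measurable (f i)) :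
    ∫⁻ x, ∏ i, f i (x i) ∂Measure.pi μ = ∏ i, ∫⁻ t, f i t ∂μ i := by
  induction n with
  | zero => simp
  | succ n ih =>
    calc ∫⁻ x, ∏ i, f i (x i) ∂Measure.pi μ
        = ∫⁻ x : X × (Fin n → X), f 0 x.1 * ∏ i : Fin n, f i.succ (x.2 i)
            ∂(μ 0).prod (Measure.pi fun i => μ i.succ) := by
          rw [← ((measurePreserving_piFinSuccAbove μ 0).symm).lintegral_comp_emb
            (MeasurableEquiv.measurableEmbedding _)]
          simp_rw [MeasurableEquiv.piFinSuccAbove_symm_apply, Fin.insertNthEquiv,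
            Fin.prod_univ_succ, Fin.insertNth_zero, Equiv.coe_fn_mk, Fin.cons_succ,
            Fin.zero_succAbove, cast_eq, Fin.cons_zero]
      _ = (∫⁻ t, f 0 t ∂μ 0) * ∏ i : Fin n, ∫⁻ t, f i.succ t ∂μ i.succ := by
          rw [← ih fun i => hf i.succ]
          exact lintegral_prod_mul (hf 0).aemeasurable
            (Finset.measurable_prod _ fun (i : Fin n) _ =>
              (hf i.succ).comp (measurable_pi_apply i)).aemeasurable
      _ = ∏ i, ∫⁻ t, f i t ∂μ i := (Fin.prod_univ_succ (fun i => ∫⁻ t, f i t ∂μ i)).symm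

theorem lintegral_fintype_prod_eq_prod [Fintype ι] {μ : ι → Measure X}
    [∀ i, SigmaFinite (μ i)] {f : ι → X → ℝ≥0∞} (hf : ∀ i, Measurable (f i)) :
    ∫⁻ x, ∏ i, f i (x i) ∂Measure.pi μ = ∏ i, ∫⁻ t, f i t ∂μ i := by
  let e := (Fintype.equivFin ι).symm
  rw [← (measurePreserving_piCongrLeft μ e).lintegral_comp_emb
    (MeasurableEquiv.measurableEmbedding _)]
  simp_rw [← e.prod_comp, MeasurableEquiv.coe_piCongrLeft, Equiv.piCongrLeft_apply_apply]
  exact lintegral_fin_nat_prod_eq_prod fun i => hf (e i)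

theorem Measure.pi_withDensity [Fintype ι] {μ : ι → Measure X} [∀ i, SigmaFinite (μ i)]
    {f : ι → X → ℝ≥0∞} (hf : ∀ i, Measurable (f i))
    [∀ i, SigmaFinite ((μ i).withDensity (f i))] :
    Measure.pi (fun i => (μ i).withDensity (f i)) =
      (Measure.pi μ).withDensity fun x => ∏ i, f i (x i) := by
  refine Measure.pi_eq fun s hs => ?_
  rw [withDensity_apply _ (MeasurableSet.univ_pi hs), Measure.restrict_pi_pi,
    lintegral_fintype_prod_eq_prod hf]
  exact Finset.prod_congr rfl fun i _ => (withDensity_apply _ (hs i)).symm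

end Products

theorem withDensity_ofReal_exp_ne_zero {α : Type*} [MeasurableSpace α] {μ : Measure α}
    [NeZero μ] {g : α → ℝ} (hg : Measurable g) :
    μ.withDensity (fun x => ENNReal.ofReal (Real.exp (g x))) ≠ 0 := by
  rw [Ne, withDensity_eq_zero_iff (by fun_prop)]
  intro h
  obtain ⟨x, hx⟩ := h.exists
  exact (ENNReal.ofReal_pos.mpr (Real.exp_pos (g x))).ne' hx

theorem withDensity_apply_le_mul_of_forall_le {α : Type*} [MeasurableSpace α] {μ : Measure α}
    [SFinite μ] {f : α → ℝ≥0∞} {s : Set α} {C : ℝ≥0∞} (hf : ∀ x ∈ s, f x ≤ C) :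
    μ.withDensity f s ≤ C * μ s :=
  calc μ.withDensity f s = ∫⁻ x in s, f x ∂μ := withDensity_apply' f s
    _ ≤ ∫⁻ _ in s, C ∂μ := setLIntegral_mono measurable_const hf
    _ = C * μ s := setLIntegral_const s C

end MeasureTheory

namespace ProbabilityTheory.iIndepFun

variable {Ω ι : Type*} [MeasurableSpace Ω] [Fintype ι] {μ : Measure Ω} {Z : ι → Ω → ℝ}

theorem map_eq_withDensity_exp_sum (hZ : iIndepFun Z μ) {g : ℝ → ℝ} (hg : Measurable g)
    (hlaw : ∀ i, μ.map (Z i) = volume.withDensity fun t => ENNReal.ofReal (Real.exp (g t))) :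
    μ.map (fun ω i => Z i ω) =
      volume.withDensity fun x => ENNReal.ofReal (Real.exp (∑ i, g (x i))) := by
  have hZ_meas : ∀ i, AEMeasurable (Z i) μ := fun i =>
    .of_map_ne_zero (by rw [hlaw i]; exact withDensity_ofReal_exp_ne_zero hg)
  rw [hZ.map_fun_eq_pi_map hZ_meas, funext hlaw,
    Measure.pi_withDensity fun _ => (hg.exp).ennreal_ofReal, ← volume_pi]
  congr with x
  rw [Real.exp_sum, ENNReal.ofReal_prod_of_nonneg fun i _ => (Real.exp_pos _).le]

theorem measure_preimage_le_exp_mul_volume (hZ : iIndepFun Z μ) {M : ℝ → ℝ}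
    (hM : Measurable M) {α ψ a : ℝ} (hα : α ≤ 0)
    (hlaw : ∀ i, μ.map (Z i) =
      volume.withDensity fun t => ENNReal.ofReal (Real.exp (α * M t - ψ)))
    {E : Set (ι → ℝ)} (hE : MeasurableSet E) (haE : ∀ x ∈ E, a ≤ ∑ i, M (x i)) :
    μ ((fun ω i => Z i ω) ⁻¹' E)
      ≤ ENNReal.ofReal (Real.exp (α * a - Fintype.card ι * ψ)) * volume E := by
  have hjoint := hZ.map_eq_withDensity_exp_sum ((hM.const_mul α).sub_const ψ) hlaw
  have hvec : AEMeasurable (fun ω i => Z i ω) μ :=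
    .of_map_ne_zero (by rw [hjoint]; exact withDensity_ofReal_exp_ne_zero (by fun_prop))
  rw [← Measure.map_apply_of_aemeasurable hvec hE, hjoint]
  refine withDensity_apply_le_mul_of_forall_le fun x hx => ?_
  gcongr
  rw [Finset.sum_sub_distrib, ← Finset.mul_sum, Finset.sum_const, Finset.card_univ,
    nsmul_eq_mul]
  nlinarith [haE x hx]

end ProbabilityTheory.iIndepFun

theorem exp_neg_mul_toReal_le {p v : ℝ≥0∞} {K : ℝ} (hv : v ≠ ⊤)
    (h : p ≤ ENNReal.ofReal (Real.exp K) * v) : Real.exp (-K) * p.toReal ≤ v.toReal := by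
  have h' := ENNReal.toReal_mono (ENNReal.mul_ne_top ENNReal.ofReal_ne_top hv) h
  rw [ENNReal.toReal_mul, ENNReal.toReal_ofReal (Real.exp_nonneg _)] at h'
  calc Real.exp (-K) * p.toReal ≤ Real.exp (-K) * (Real.exp K * v.toReal) := by gcongr
    _ = v.toReal := by
      rw [← mul_assoc, ← Real.exp_add, neg_add_cancel, Real.exp_zero, one_mul]

theorem mem_Icc_of_one_div_mul_mem_Icc {s y c : ℝ} (hs : 0 < s)
    (h : 1 / s * y ∈ Set.Icc (-c) 0) : y ∈ Set.Icc (-(c * s)) 0 := by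
  have hy : y = s * (1 / s * y) := by field_simp
  rw [hy]
  exact ⟨by nlinarith [h.1], mul_nonpos_of_nonneg_of_nonpos hs.le h.2⟩

theorem stmt10_general {Ω : Type*} [MeasurableSpace Ω] (μ : Measure Ω) [IsProbabilityMeasure μ]
    (d : ℕ) (hd : 0 < d) (R : ℝ)
    (M : ℝ → ℝ) (hM : IsOrlicz M)
    (φ : ℝ → ℝ)
    (αs : ℝ) (hαs : αs < 0)
    (Z : Fin d → Ω → ℝ)
    (hindep : ProbabilityTheory.iIndepFun Z μ)
    (hdist : ∀ i, Measure.map (Z i) μ =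
      volume.withDensity fun x => ENNReal.ofReal (Real.exp (αs * M x - φ αs)))
    (c : ℝ) :
    Real.exp (d * (φ αs - αs * R)) * Real.exp (c * αs * Real.sqrt d) *
        (μ {ω | (1 / Real.sqrt d) * ∑ i, (M (Z i ω) - R) ∈ Set.Icc (-c) 0}).toReal
      ≤ (volume {x : Fin d → ℝ | ∑ i, M (x i) ≤ d * R}).toReal := by
  set E := {x : Fin d → ℝ | (1 / Real.sqrt d) * ∑ i, (M (x i) - R) ∈ Set.Icc (-c) 0}
  set B := {x : Fin d → ℝ | ∑ i, M (x i) ≤ d * R}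
  have hM_meas : Measurable M := hM.continuous.measurable
  have hE : MeasurableSet E := measurableSet_Icc.preimage (by fun_prop)
  have hE_bounds (x : Fin d → ℝ) (hx : x ∈ E) :
      ∑ i, M (x i) - d * R ∈ Set.Icc (-(c * Real.sqrt d)) 0 := by
    have h := mem_Icc_of_one_div_mul_mem_Icc (Real.sqrt_pos.mpr (Nat.cast_pos.mpr hd)) hx
    simpa [Finset.sum_sub_distrib] using h
  have hEB : E ⊆ B := fun x hx => sub_nonpos.mp (hE_bounds x hx).2
  have hprob := hindep.measure_preimage_le_exp_mul_volume hM_meas hαs.le hdist hE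
    (a := d * R - c * Real.sqrt d) fun x hx => by linarith [(hE_bounds x hx).1]
  have hB : volume B ≠ ⊤ := (hM.isBounded_setOf_sum_le _).measure_lt_top.ne
  calc _ = Real.exp (-(αs * (d * R - c * Real.sqrt d) - Fintype.card (Fin d) * φ αs)) *
        (μ ((fun ω i => Z i ω) ⁻¹' E)).toReal := by
        rw [← Real.exp_add, Fintype.card_fin]; congr 2; ring
    _ ≤ (volume B).toReal :=
        exp_neg_mul_toReal_le hB (hprob.trans (by gcongr))

theorem stmt10 {Ω : Type*} [MeasurableSpace Ω] (μ : Measure Ω) [IsProbabilityMeasure μ]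
    (d : ℕ) (hd : 0 < d) (R : ℝ) (hR : 0 < R)
    (M : ℝ → ℝ) (hM : IsOrlicz M)
    (φ : ℝ → ℝ) (hφ : ∀ α, φ α = Real.log (∫ x : ℝ, Real.exp (α * M x)))
    (αs : ℝ) (hαs : αs < 0) (hder : deriv φ αs = R)
    (Z : Fin d → Ω → ℝ)
    (hindep : ProbabilityTheory.iIndepFun Z μ)
    (hdist : ∀ i, Measure.map (Z i) μ =
      volume.withDensity fun x => ENNReal.ofReal (Real.exp (αs * M x - φ αs)))
    (c : ℝ) (hc : 0 < c) :
    Real.exp (d * (φ αs - αs * R)) * Real.exp (c * αs * Real.sqrt d) *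
        (μ {ω | (1 / Real.sqrt d) * ∑ i, (M (Z i ω) - R) ∈ Set.Icc (-c) 0}).toReal
      ≤ (volume {x : Fin d → ℝ | ∑ i, M (x i) ≤ d * R}).toReal :=
  stmt10_general μ d hd R M hM φ αs hαs Z hindep hdist c
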